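/- Let m, n be positive integers. Let φ : M_{mn}(ℂ) → M_{mn}(ℂ) be a linear skew RT-Hermitian map, i.e. tr(φ(A)·B) equals the negative of the complex conjugate of tr(φ(B̄)·Ā) for all A, B ∈ M_{mn}(ℂ), where X̄ denotes entrywise complex conjugation. Then tr(φ(A ⊕ B)) = tr(A ⊕ B) for all A ∈ M_m(ℂ) and B ∈ M_n(ℂ) if and only if tr₁(φ(I_{mn})) = −m·I_n and tr₂(φ(I_{mn})) = −n·I_m. -/

import Mathlib

open Matrix Kronecker BigOperators

/-!
Taking `B = I` in the skew RT-Hermitian identity shows that the trace functional of `φ` is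
`Z ↦ tr(S Z)` with `S = −conj(φ(I))`. Pairing a matrix `P` with a Kronecker sum gives
`tr(P (X ⊕ Y)) = tr(tr₂(P) X) + tr(tr₁(P) Y)`, and `tr(X ⊕ Y)` is the case `P = I`, whose
partial traces are `n·Iₘ` and `m·Iₙ`. Since the trace pairing is nondegenerate, `tr ∘ φ` agrees
with `tr` on all Kronecker sums iff `tr₁(S) = m·Iₙ` and `tr₂(S) = n·Iₘ`, i.e.
`tr₁(φ(I)) = −m·Iₙ` and `tr₂(φ(I)) = −n·Iₘ`.
-/

/-- The Kronecker sum `A ⊕ B = A ⊗ Iₙ + Iₘ ⊗ B`. -/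
def kronSum {F : Type*} [CommRing F] {m n : ℕ}
    (A : Matrix (Fin m) (Fin m) F) (B : Matrix (Fin n) (Fin n) F) :
    Matrix (Fin m × Fin n) (Fin m × Fin n) F :=
  A ⊗ₖ (1 : Matrix (Fin n) (Fin n) F) + (1 : Matrix (Fin m) (Fin m) F) ⊗ₖ B

/-- The first partial trace `tr₁(P) = Σⱼ Pⱼⱼ` (sum of the diagonal blocks). -/
def ptrace1 {F : Type*} [AddCommMonoid F] {m n : ℕ}
    (P : Matrix (Fin m × Fin n) (Fin m × Fin n) F) :
    Matrix (Fin n) (Fin n) F :=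
  Matrix.of fun a b => ∑ k : Fin m, P (k, a) (k, b)

/-- The second partial trace `tr₂(P) = Σ_{k,l} tr(P_{kl}) E_{kl}` (blockwise trace). -/
def ptrace2 {F : Type*} [AddCommMonoid F] {m n : ℕ}
    (P : Matrix (Fin m × Fin n) (Fin m × Fin n) F) :
    Matrix (Fin m) (Fin m) F :=
  Matrix.of fun k l => ∑ a : Fin n, P (k, a) (l, a)

def IsSkewRTHermitian {ι : Type*} [Fintype ι] (φ : Matrix ι ι ℂ →ₗ[ℂ] Matrix ι ι ℂ) : Prop :=
  ∀ A B : Matrix ι ι ℂ, (φ A * B).trace =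
    -(starRingEnd ℂ) ((φ (B.map (starRingEnd ℂ)) * A.map (starRingEnd ℂ)).trace)

/-- `-(φ 1).map conj` is the RT-transform `φ'` evaluated at the identity. -/
theorem IsSkewRTHermitian.trace_apply {ι : Type*} [Fintype ι] [DecidableEq ι]
    {φ : Matrix ι ι ℂ →ₗ[ℂ] Matrix ι ι ℂ} (hφ : IsSkewRTHermitian φ) (Z : Matrix ι ι ℂ) :
    (φ Z).trace = (-(φ 1).map (starRingEnd ℂ) * Z).trace := by
  have h := hφ Z 1
  rw [mul_one, Matrix.map_one _ (map_zero _) (map_one _), AddMonoidHom.map_trace, Matrix.map_mul,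
    Matrix.map_map] at h
  simpa [Matrix.neg_mul, Function.comp_def] using h

theorem Matrix.forall_trace_mul_add_trace_mul_eq_iff {ι κ R : Type*} [Fintype ι] [Fintype κ]
    [NonAssocSemiring R] {A A' : Matrix ι ι R} {B B' : Matrix κ κ R} :
    (∀ X Y, (A * X).trace + (B * Y).trace = (A' * X).trace + (B' * Y).trace) ↔
      A = A' ∧ B = B' := by
  refine ⟨fun h => ⟨?_, ?_⟩, fun ⟨hA, hB⟩ _ _ => hA ▸ hB ▸ rfl⟩
  · exact ext_iff_trace_mul_right.2 fun X => by simpa using h X 0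
  · exact ext_iff_trace_mul_right.2 fun Y => by simpa using h 0 Y

section PartialTrace

variable {R : Type*} {m n : ℕ}

theorem ptrace1_neg [AddCommGroup R] (P : Matrix (Fin m × Fin n) (Fin m × Fin n) R) :
    ptrace1 (-P) = -ptrace1 P := by
  ext; simp [ptrace1]

theorem ptrace2_neg [AddCommGroup R] (P : Matrix (Fin m × Fin n) (Fin m × Fin n) R) :
    ptrace2 (-P) = -ptrace2 P := by
  ext; simp [ptrace2]

theorem ptrace1_map {S F : Type*} [AddCommMonoid R] [AddCommMonoid S] [FunLike F R S]
    [AddMonoidHomClass F R S] (f : F)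
    (P : Matrix (Fin m × Fin n) (Fin m × Fin n) R) :
    ptrace1 (P.map f) = (ptrace1 P).map f := by
  ext; simp [ptrace1]

theorem ptrace2_map {S F : Type*} [AddCommMonoid R] [AddCommMonoid S] [FunLike F R S]
    [AddMonoidHomClass F R S] (f : F)
    (P : Matrix (Fin m × Fin n) (Fin m × Fin n) R) :
    ptrace2 (P.map f) = (ptrace2 P).map f := by
  ext; simp [ptrace2]

theorem ptrace1_one [Semiring R] :
    ptrace1 (1 : Matrix (Fin m × Fin n) (Fin m × Fin n) R) = (m : R) • 1 := by
  ext a b; by_cases h : a = b <;> simp [ptrace1, Matrix.one_apply, h]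

theorem ptrace2_one [Semiring R] :
    ptrace2 (1 : Matrix (Fin m × Fin n) (Fin m × Fin n) R) = (n : R) • 1 := by
  ext k l; by_cases h : k = l <;> simp [ptrace2, Matrix.one_apply, h]

theorem trace_mul_kronecker_one [Semiring R] (P : Matrix (Fin m × Fin n) (Fin m × Fin n) R)
    (X : Matrix (Fin m) (Fin m) R) :
    (P * (X ⊗ₖ (1 : Matrix (Fin n) (Fin n) R))).trace = (ptrace2 P * X).trace := by
  simp only [Matrix.trace, diag_apply, Matrix.mul_apply, ptrace2, of_apply,
    kroneckerMap_apply, Matrix.one_apply, mul_ite, mul_one, mul_zero,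
    Fintype.sum_prod_type, Finset.sum_mul, Finset.sum_ite_eq', Finset.mem_univ, if_true]
  exact Finset.sum_congr rfl fun _ _ => Finset.sum_comm

theorem trace_mul_one_kronecker [Semiring R] (P : Matrix (Fin m × Fin n) (Fin m × Fin n) R)
    (Y : Matrix (Fin n) (Fin n) R) :
    (P * ((1 : Matrix (Fin m) (Fin m) R) ⊗ₖ Y)).trace = (ptrace1 P * Y).trace := by
  simp only [Matrix.trace, diag_apply, Matrix.mul_apply, ptrace1, of_apply,
    kroneckerMap_apply, Matrix.one_apply, ite_mul, one_mul, zero_mul, mul_ite, mul_zero,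
    Fintype.sum_prod_type, Finset.sum_mul, Finset.sum_ite_irrel, Finset.sum_const_zero,
    Finset.sum_ite_eq', Finset.mem_univ, if_true]
  rw [Finset.sum_comm]
  exact Finset.sum_congr rfl fun _ _ => Finset.sum_comm

theorem trace_mul_kronSum [CommRing R] (P : Matrix (Fin m × Fin n) (Fin m × Fin n) R)
    (X : Matrix (Fin m) (Fin m) R) (Y : Matrix (Fin n) (Fin n) R) :
    (P * kronSum X Y).trace = (ptrace2 P * X).trace + (ptrace1 P * Y).trace := by
  rw [kronSum, Matrix.mul_add, Matrix.trace_add, trace_mul_kronecker_one, trace_mul_one_kronecker]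

theorem forall_trace_mul_kronSum_eq_trace_iff [CommRing R]
    (P : Matrix (Fin m × Fin n) (Fin m × Fin n) R) :
    (∀ X Y, (P * kronSum X Y).trace = (kronSum X Y).trace) ↔
      ptrace1 P = (m : R) • 1 ∧ ptrace2 P = (n : R) • 1 := by
  calc (∀ X Y, (P * kronSum X Y).trace = (kronSum X Y).trace)
      ↔ ∀ X Y, (P * kronSum X Y).trace = (1 * kronSum X Y).trace := by simp only [Matrix.one_mul]
    _ ↔ _ := by
      simp only [trace_mul_kronSum, Matrix.forall_trace_mul_add_trace_mul_eq_iff, ptrace1_one,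
        ptrace2_one, and_comm]

end PartialTrace

theorem neg_map_conj_eq_natCast_smul_one_iff {ι : Type*} [DecidableEq ι] (M : Matrix ι ι ℂ)
    (c : ℕ) :
    -M.map (starRingEnd ℂ) = (c : ℂ) • 1 ↔ M = -((c : ℂ) • 1) := by
  have hreal : (-((c : ℂ) • 1 : Matrix ι ι ℂ)).map (starRingEnd ℂ) = -((c : ℂ) • 1) := by
    ext i j; by_cases h : i = j <;> simp [h]
  rw [neg_eq_iff_eq_neg, ← hreal, (Matrix.map_injective (RingHom.injective _)).eq_iff, hreal]

theorem trace_kronSum_preserved_iff_of_skew_rt_hermitian_general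
    {m n : ℕ}
    (φ : Matrix (Fin m × Fin n) (Fin m × Fin n) ℂ →ₗ[ℂ]
         Matrix (Fin m × Fin n) (Fin m × Fin n) ℂ)
    (hherm : ∀ A B : Matrix (Fin m × Fin n) (Fin m × Fin n) ℂ,
        (φ A * B).trace =
          -((starRingEnd ℂ)
            ((φ (B.map (starRingEnd ℂ)) * A.map (starRingEnd ℂ)).trace))) :
    (∀ (X : Matrix (Fin m) (Fin m) ℂ) (Y : Matrix (Fin n) (Fin n) ℂ),
        (φ (kronSum X Y)).trace = (kronSum X Y).trace) ↔
      (ptrace1 (φ 1) = -((m : ℂ) • (1 : Matrix (Fin n) (Fin n) ℂ)) ∧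
       ptrace2 (φ 1) = -((n : ℂ) • (1 : Matrix (Fin m) (Fin m) ℂ))) := by
  simp_rw [IsSkewRTHermitian.trace_apply (φ := φ) hherm]
  rw [forall_trace_mul_kronSum_eq_trace_iff, ptrace1_neg, ptrace2_neg, ptrace1_map, ptrace2_map,
    neg_map_conj_eq_natCast_smul_one_iff, neg_map_conj_eq_natCast_smul_one_iff]

/-- A skew RT-Hermitian linear map `φ` on complex matrices (i.e.
`tr(φ(A)B) = −conj(tr(φ(B̄)Ā))` for all `A, B`, where `X̄` is entrywise conjugation)
preserves the trace of all Kronecker sums iff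
`tr₁(φ(I)) = −m·Iₙ` and `tr₂(φ(I)) = −n·Iₘ`. -/
theorem trace_kronSum_preserved_iff_of_skew_rt_hermitian
    {m n : ℕ} (hm : 0 < m) (hn : 0 < n)
    (φ : Matrix (Fin m × Fin n) (Fin m × Fin n) ℂ →ₗ[ℂ]
         Matrix (Fin m × Fin n) (Fin m × Fin n) ℂ)
    (hherm : ∀ A B : Matrix (Fin m × Fin n) (Fin m × Fin n) ℂ,
        (φ A * B).trace =
          -((starRingEnd ℂ)
            ((φ (B.map (starRingEnd ℂ)) * A.map (starRingEnd ℂ)).trace))) :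
    (∀ (X : Matrix (Fin m) (Fin m) ℂ) (Y : Matrix (Fin n) (Fin n) ℂ),
        (φ (kronSum X Y)).trace = (kronSum X Y).trace) ↔
      (ptrace1 (φ 1) = -((m : ℂ) • (1 : Matrix (Fin n) (Fin n) ℂ)) ∧
       ptrace2 (φ 1) = -((n : ℂ) • (1 : Matrix (Fin m) (Fin m) ℂ))) :=
  trace_kronSum_preserved_iff_of_skew_rt_hermitian_general φ hherm
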